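/- arXiv:math-ph/0612072 — 6 statements merged into one kernel-verified Lean document; each statement's English description precedes it below -/
import Mathlib

section
/- Let α(w) = (aw+b)/(cw+d) be a Möbius transformation of the complex plane with a,b,c,d ∈ ℂ and ad − bc ≠ 0. Let w_1, …, w_n ∈ ℂ be pairwise distinct points with cw_i + d ≠ 0 for every i, and let k_1, …, k_n be integers with ∑_{i=1}^n k_i = 0. Then ∏_{1 ≤ i < j ≤ n} |α(w_i) − α(w_j)|^{k_i k_j/(2π)} = (∏_{i=1}^n |α'(w_i)|^{−k_i²/(4π)}) · ∏_{1 ≤ i < j ≤ n} |w_i − w_j|^{k_i k_j/(2π)}, where α'(w) = (ad − bc)/(cw+d)² is the complex derivative of α. -/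
open Real Finset

/-!
Since `‖α z - α w‖ = √‖α' z‖ * √‖α' w‖ * ‖z - w‖`, the transformed correlation function is the
flat one times `∏_{i<j} (f_i f_j)^(k_i k_j/(2π))` with `f_i = √‖α' w_i‖`. Collecting the powers of
each `f_i` gives the exponent `k_i ∑_{j ≠ i} k_j / (2π)`, which charge neutrality turns into
`-k_i² / (2π)`.
-/

theorem prod_filter_lt_mul_swap_eq_prod_erase {ι M : Type*} [Fintype ι] [LinearOrder ι]
    [CommMonoid M] (F : ι → ι → M) :
    ∏ i, ∏ j ∈ univ.filter (fun j => i < j), (F i j * F j i) = ∏ i, ∏ j ∈ univ.erase i, F i j := by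
  have hswap : ∏ i, ∏ j ∈ univ.filter (fun j => i < j), F j i
      = ∏ i, ∏ j ∈ univ.filter (fun j => j < i), F i j :=
    prod_comm' (by simp)
  have hsplit : ∀ i : ι, univ.erase i
      = univ.filter (fun j => i < j) ∪ univ.filter (fun j => j < i) := by
    intro i; ext j; simp [lt_or_lt_iff_ne, ne_comm]
  simp_rw [prod_mul_distrib]
  rw [hswap, ← prod_mul_distrib]
  refine prod_congr rfl fun i _ => ?_
  rw [hsplit, prod_union (disjoint_filter.2 fun j _ h h' => lt_asymm h h')]

theorem prod_filter_lt_mul_rpow_of_sum_eq_zero {ι : Type*} [Fintype ι] [LinearOrder ι]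
    {f k : ι → ℝ} (hf : ∀ i, 0 < f i) (hk : ∑ i, k i = 0) (t : ℝ) :
    ∏ i, ∏ j ∈ univ.filter (fun j => i < j), (f i * f j) ^ (k i * k j / t)
      = ∏ i, f i ^ (-k i ^ 2 / t) := calc
  _ = ∏ i, ∏ j ∈ univ.filter (fun j => i < j),
        (f i ^ (k i * k j / t) * f j ^ (k j * k i / t)) := by
    refine prod_congr rfl fun i _ => prod_congr rfl fun j _ => ?_
    rw [mul_rpow (hf i).le (hf j).le, mul_comm (k j)]
  _ = ∏ i, ∏ j ∈ univ.erase i, f i ^ (k i * k j / t) := prod_filter_lt_mul_swap_eq_prod_erase _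
  _ = ∏ i, f i ^ (∑ j ∈ univ.erase i, k i * k j / t) :=
    prod_congr rfl fun i _ => (rpow_sum_of_pos (hf i) _ _).symm
  _ = _ := by
    refine prod_congr rfl fun i _ => ?_
    rw [← sum_div, ← mul_sum, sum_erase_eq_sub (mem_univ i), hk]
    ring_nf

theorem mobius_sub_mobius {K : Type*} [Field K] {a b c d z w : K}
    (hz : c * z + d ≠ 0) (hw : c * w + d ≠ 0) :
    (a * z + b) / (c * z + d) - (a * w + b) / (c * w + d)
      = (a * d - b * c) * (z - w) / ((c * z + d) * (c * w + d)) := by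
  rw [div_sub_div _ _ hz hw]
  ring

theorem norm_mobius_sub_mobius {K : Type*} [NormedField K] {a b c d z w : K}
    (hz : c * z + d ≠ 0) (hw : c * w + d ≠ 0) :
    ‖(a * z + b) / (c * z + d) - (a * w + b) / (c * w + d)‖
      = √‖(a * d - b * c) / (c * z + d) ^ 2‖ * √‖(a * d - b * c) / (c * w + d) ^ 2‖
        * ‖z - w‖ := by
  have hsqrt : ∀ x : K, √‖(a * d - b * c) / x ^ 2‖ = √‖a * d - b * c‖ / ‖x‖ := fun x => by
    rw [norm_div, norm_pow, sqrt_div' _ (sq_nonneg _), sqrt_sq (norm_nonneg _)]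
  rw [mobius_sub_mobius hz hw, hsqrt, hsqrt, norm_div, norm_mul, norm_mul]
  field_simp
  rw [sq_sqrt (norm_nonneg _), mul_comm]

theorem mobius_covariance_flat_correlation_general
    (n : ℕ) (a b c d : ℂ) (hdet : a * d - b * c ≠ 0)
    (w : Fin n → ℂ)
    (hcd : ∀ i, c * w i + d ≠ 0)
    (k : Fin n → ℤ) (hk : ∑ i, k i = 0) :
    (∏ i, ∏ j ∈ Finset.univ.filter (fun j => i < j),
        ‖(a * w i + b) / (c * w i + d) - (a * w j + b) / (c * w j + d)‖
          ^ ((k i : ℝ) * (k j : ℝ) / (2 * π)))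
      = (∏ i, ‖(a * d - b * c) / (c * w i + d) ^ 2‖
            ^ (-(k i : ℝ) ^ 2 / (4 * π)))
        * ∏ i, ∏ j ∈ Finset.univ.filter (fun j => i < j),
            ‖w i - w j‖ ^ ((k i : ℝ) * (k j : ℝ) / (2 * π)) := by
  set f : Fin n → ℝ := fun i => √‖(a * d - b * c) / (c * w i + d) ^ 2‖
  have hf : ∀ i, 0 < f i := fun i =>
    sqrt_pos.2 (norm_pos_iff.2 (div_ne_zero hdet (pow_ne_zero 2 (hcd i))))
  have hk_real : ∑ i, (k i : ℝ) = 0 := by exact_mod_cast hk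
  calc
    _ = ∏ i, ∏ j ∈ univ.filter (fun j => i < j),
        (f i * f j) ^ ((k i : ℝ) * k j / (2 * π)) * ‖w i - w j‖ ^ ((k i : ℝ) * k j / (2 * π)) := by
      refine prod_congr rfl fun i _ => prod_congr rfl fun j _ => ?_
      rw [norm_mobius_sub_mobius (hcd i) (hcd j),
        mul_rpow (mul_pos (hf i) (hf j)).le (norm_nonneg _)]
    _ = (∏ i, f i ^ (-(k i : ℝ) ^ 2 / (2 * π))) * ∏ i, ∏ j ∈ univ.filter (fun j => i < j),
        ‖w i - w j‖ ^ ((k i : ℝ) * k j / (2 * π)) := by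
      simp_rw [prod_mul_distrib]
      rw [prod_filter_lt_mul_rpow_of_sum_eq_zero hf hk_real]
    _ = _ := by
      congr 1
      refine prod_congr rfl fun i _ => ?_
      rw [show f i = _ from sqrt_eq_rpow _, ← rpow_mul (norm_nonneg _)]
      ring_nf

/-- Möbius covariance of the flat massless free-boson correlation functions:
for a Möbius transformation `α(w) = (aw+b)/(cw+d)` and a charge-neutral configuration,
`∏_{i<j} |α(w_i) - α(w_j)|^{k_i k_j/(2π)}
  = ∏_i |α'(w_i)|^{-k_i²/(4π)} · ∏_{i<j} |w_i - w_j|^{k_i k_j/(2π)}`. -/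
theorem mobius_covariance_flat_correlation
    (n : ℕ) (a b c d : ℂ) (hdet : a * d - b * c ≠ 0)
    (w : Fin n → ℂ) (hw : Function.Injective w)
    (hcd : ∀ i, c * w i + d ≠ 0)
    (k : Fin n → ℤ) (hk : ∑ i, k i = 0) :
    (∏ i, ∏ j ∈ Finset.univ.filter (fun j => i < j),
        ‖(a * w i + b) / (c * w i + d) - (a * w j + b) / (c * w j + d)‖
          ^ ((k i : ℝ) * (k j : ℝ) / (2 * π)))
      = (∏ i, ‖(a * d - b * c) / (c * w i + d) ^ 2‖
            ^ (-(k i : ℝ) ^ 2 / (4 * π)))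
        * ∏ i, ∏ j ∈ Finset.univ.filter (fun j => i < j),
            ‖w i - w j‖ ^ ((k i : ℝ) * (k j : ℝ) / (2 * π)) :=
  mobius_covariance_flat_correlation_general n a b c d hdet w hcd k hk
end

section
/- Call a configuration a finite list Z = ((k_1,z_1),…,(k_n,z_n)) with k_i ∈ ℤ and z_i ∈ ℂ pairwise distinct satisfying 0 < |z_i| < 1. For configurations Z = ((k_i,z_i))_{i=1}^n and Z' = ((k'_j,z'_j))_{j=1}^m define B(Z,Z') = 0 if ∑_i k_i ≠ ∑_j k'_j, and otherwise B(Z,Z') = (∏_{i=1}^n |z_i|^{−k_i²/(2π)}) · (∏_{1≤i<i'≤n} |1/conj(z_i) − 1/conj(z_{i'})|^{k_i k_{i'}/(2π)}) · (∏_{1≤j<j'≤m} |z'_j − z'_{j'}|^{k'_j k'_{j'}/(2π)}) · (∏_{i=1}^n ∏_{j=1}^m |1/conj(z_i) − z'_j|^{−k_i k'_j/(2π)}). Then for every finite family of configurations Z_1, …, Z_N and every choice of complex coefficients c_1, …, c_N, the number ∑_{a,b=1}^N conj(c_a) c_b B(Z_a, Z_b) is real and nonnegative. -/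
/-!
Since `|1/z̄ - 1/w̄| = |z - w| / (|z| |w|)` and `|1/z̄ - w| = |1 - z̄ w| / |z|`, charge neutrality
makes every power of `|z_i|` cancel: `B(Z, Z') = [Q(Z) = Q(Z')] e^{E(Z)} e^{E(Z')} e^{G(Z, Z')}`,
where `Q` is the total charge, `E(Z) = (1/2π) ∑_{i<i'} k_i k_i' log |z_i - z_i'|` and, by the
Taylor series of `-log (1 - u)`,
`G(Z, Z') = -(1/2π) ∑ k_i k'_j log |1 - z̄_i z'_j| = ∑_{n ≥ 1} Re (conj (S_n Z) S_n Z') / (2π n)`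
with `S_n Z = ∑ k_i z_i ^ n`. Each term of this series is a positive semidefinite kernel, hence so
is `G`; by the Schur product theorem so are its entrywise exponential and its products with the
kernels `[Q(Z) = Q(Z')]` and `e^{E(Z)} e^{E(Z')}`.
-/

open Real Finset

/-- A configuration: a finite list of integer charges at pairwise distinct points
of the punctured open unit disc. -/
structure Config where
  n : ℕ
  k : Fin n → ℤ
  z : Fin n → ℂ
  hz : ∀ i, 0 < ‖z i‖ ∧ ‖z i‖ < 1
  hinj : Function.Injective z

/-- The flat-metric reflected correlation `B(Z,Z') = ⟨(Θ̃ Z) Z'⟩`. -/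
noncomputable def reflCorr (Z Z' : Config) : ℝ :=
  if ∑ i, Z.k i ≠ ∑ j, Z'.k j then 0
  else
    (∏ i, ‖Z.z i‖ ^ (-(Z.k i : ℝ) ^ 2 / (2 * π)))
    * (∏ i, ∏ i' ∈ Finset.univ.filter (fun i' => i < i'),
        ‖(starRingEnd ℂ (Z.z i))⁻¹ - (starRingEnd ℂ (Z.z i'))⁻¹‖
          ^ ((Z.k i : ℝ) * (Z.k i' : ℝ) / (2 * π)))
    * (∏ j, ∏ j' ∈ Finset.univ.filter (fun j' => j < j'),
        ‖Z'.z j - Z'.z j'‖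
          ^ ((Z'.k j : ℝ) * (Z'.k j' : ℝ) / (2 * π)))
    * (∏ i, ∏ j,
        ‖(starRingEnd ℂ (Z.z i))⁻¹ - Z'.z j‖
          ^ (-((Z.k i : ℝ) * (Z'.k j : ℝ)) / (2 * π)))

open scoped ComplexOrder

namespace Matrix

variable {ι 𝕜 : Type*} [RCLike 𝕜]

theorem isClosed_setOf_posSemidef : IsClosed {A : Matrix ι ι 𝕜 | A.PosSemidef} := by
  have hset : {A : Matrix ι ι 𝕜 | A.PosSemidef} = {A | A.IsHermitian} ∩
      ⋂ x : ι →₀ 𝕜, {A | 0 ≤ x.sum fun i xi => x.sum fun j xj => star xi * A i j * xj} := by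
    ext; simp [PosSemidef]
  rw [hset]
  refine (isClosed_eq continuous_id.matrix_conjTranspose continuous_id).inter ?_
  exact isClosed_iInter fun x => isClosed_le continuous_const <|
    continuous_finsetSum _ fun i _ => continuous_finsetSum _ fun j _ =>
      (continuous_const.mul (continuous_id.matrix_elem i j)).mul continuous_const

theorem PosSemidef.of_hasSum {β : Type*} {f : β → Matrix ι ι 𝕜} {A : Matrix ι ι 𝕜}
    (hf : HasSum f A) (h : ∀ b, (f b).PosSemidef) : A.PosSemidef :=
  isClosed_setOf_posSemidef.mem_of_tendsto hf
    (Filter.Eventually.of_forall fun s => posSemidef_sum s fun b _ => h b)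

theorem PosSemidef.map_re {A : Matrix ι ι 𝕜} (hA : A.PosSemidef) :
    (A.map fun z => (RCLike.re z : 𝕜)).PosSemidef := by
  convert (hA.add hA.transpose).smul (a := (2⁻¹ : ℝ)) (by norm_num) using 1
  ext a b
  simp only [map_apply, smul_apply, add_apply, transpose_apply]
  rw [RCLike.re_eq_add_conj, ← hA.1.apply a b, RCLike.real_smul_eq_coe_mul, RCLike.ofReal_inv,
    RCLike.ofReal_ofNat]
  simp only [RCLike.star_def, RingHomCompTriple.comp_apply, RingHom.id_apply]
  ring

theorem posSemidef_of_ite_eq {β : Type*} [DecidableEq β] [Fintype ι] (q : ι → β) :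
    (of fun a b => if q a = q b then (1 : 𝕜) else 0).PosSemidef := by
  convert posSemidef_sum (univ.image q) fun y _ =>
    posSemidef_vecMulVec_star_self (fun a => if q a = y then (1 : 𝕜) else 0) using 1
  ext a b
  simp [Matrix.sum_apply, vecMulVec_apply]

variable [Finite ι]

theorem PosSemidef.map_pow {A : Matrix ι ι 𝕜} (hA : A.PosSemidef) (t : ℕ) :
    (A.map (· ^ t)).PosSemidef := by
  induction t with
  | zero =>
    convert posSemidef_vecMulVec_star_self (fun _ : ι => (1 : 𝕜)) using 1
    ext
    simp [vecMulVec_apply]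
  | succ t ih =>
    convert ih.hadamard hA using 1
    ext
    simp [pow_succ]

theorem PosSemidef.map_exp {A : Matrix ι ι 𝕜} (hA : A.PosSemidef) :
    (A.map NormedSpace.exp).PosSemidef := by
  refine PosSemidef.of_hasSum (f := fun t => ((t.factorial : ℝ)⁻¹) • A.map (· ^ t)) ?_
    fun t => (hA.map_pow t).smul (by positivity)
  refine Pi.hasSum.2 fun a => Pi.hasSum.2 fun b => ?_
  simpa [div_eq_inv_mul, RCLike.real_smul_eq_coe_mul] using
    NormedSpace.expSeries_div_hasSum_exp (A a b)

end Matrix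

theorem Finset.sum_sum_filter_lt_add_swap {ι R : Type*} [Fintype ι] [LinearOrder ι] [CommRing R]
    (f g : ι → R) :
    ∑ i, ∑ j ∈ univ.filter (i < ·), (f i * g j + f j * g i) = ∑ i, f i * (∑ j, g j - g i) := by
  have hswap : ∑ i, ∑ j, (if i < j then f j * g i else 0)
      = ∑ i, ∑ j, (if j < i then f i * g j else 0) := sum_comm
  have hsplit : ∀ i j, ((if i < j then f i * g j else 0) + if j < i then f i * g j else 0)
      = f i * g j - if i = j then f i * g j else 0 := by
    intro i j
    rcases lt_trichotomy i j with h | rfl | h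
    · simp [h, h.not_gt, h.ne]
    · simp
    · simp [h, h.not_gt, h.ne']
  calc ∑ i, ∑ j ∈ univ.filter (i < ·), (f i * g j + f j * g i)
      = ∑ i, ∑ j, (if i < j then f i * g j else 0)
          + ∑ i, ∑ j, (if i < j then f j * g i else 0) := by
        simp only [sum_filter, ← sum_add_distrib, ← ite_add_zero]
    _ = ∑ i, f i * (∑ j, g j - g i) := by
        simp only [hswap, ← sum_add_distrib, hsplit, sum_sub_distrib, sum_ite_eq, mem_univ,
          if_true, mul_sub, mul_sum]

theorem Real.exp_sum_mul_log {α : Type*} {s : Finset α} {b : α → ℝ} (c : α → ℝ)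
    (hb : ∀ i ∈ s, 0 < b i) : exp (∑ i ∈ s, c i * log (b i)) = ∏ i ∈ s, b i ^ c i := by
  rw [exp_sum]
  exact prod_congr rfl fun i hi => by rw [rpow_def_of_pos (hb i hi), mul_comm]

theorem Complex.norm_inv_conj_sub_inv_conj {z w : ℂ} (hz : z ≠ 0) (hw : w ≠ 0) :
    ‖(starRingEnd ℂ z)⁻¹ - (starRingEnd ℂ w)⁻¹‖ = ‖z - w‖ / (‖z‖ * ‖w‖) := by
  rw [inv_sub_inv ((map_ne_zero _).2 hz) ((map_ne_zero _).2 hw), ← map_sub, ← map_mul, norm_div,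
    Complex.norm_conj, Complex.norm_conj, norm_mul, norm_sub_rev]

theorem Complex.norm_inv_conj_sub {z : ℂ} (w : ℂ) (hz : z ≠ 0) :
    ‖(starRingEnd ℂ z)⁻¹ - w‖ = ‖1 - starRingEnd ℂ z * w‖ / ‖z‖ := by
  rw [← Complex.norm_conj z, ← norm_div, sub_div, one_div,
    mul_div_cancel_left₀ _ ((map_ne_zero _).2 hz)]

namespace Config

variable (Z Z' : Config)

def charge : ℤ := ∑ i, Z.k i

noncomputable def selfEnergy : ℝ :=
  ∑ i, ∑ i' ∈ univ.filter (i < ·), (Z.k i : ℝ) * Z.k i' / (2 * π) * log ‖Z.z i - Z.z i'‖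

noncomputable def moment (n : ℕ) : ℂ := ∑ i, (Z.k i : ℂ) * Z.z i ^ n

noncomputable def interaction : ℝ :=
  ∑ i, ∑ j, -((Z.k i : ℝ) * Z'.k j) / (2 * π) * log ‖1 - starRingEnd ℂ (Z.z i) * Z'.z j‖

theorem z_ne_zero (i : Fin Z.n) : Z.z i ≠ 0 := norm_pos_iff.1 (Z.hz i).1

theorem norm_conj_mul_lt_one (i : Fin Z.n) (j : Fin Z'.n) :
    ‖starRingEnd ℂ (Z.z i) * Z'.z j‖ < 1 := by
  rw [norm_mul, Complex.norm_conj]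
  exact mul_lt_one_of_nonneg_of_lt_one_left (norm_nonneg _) (Z.hz i).2 (Z'.hz j).2.le

theorem hasSum_conj_moment_mul_moment :
    HasSum (fun n : ℕ => starRingEnd ℂ (Z.moment (n + 1)) * Z'.moment (n + 1) / (n + 1))
      (-∑ i, ∑ j, (Z.k i * Z'.k j : ℂ) * Complex.log (1 - starRingEnd ℂ (Z.z i) * Z'.z j)) := by
  have hexpand : ∀ n, starRingEnd ℂ (Z.moment n) * Z'.moment n
      = ∑ i, ∑ j, (Z.k i * Z'.k j : ℂ) * (starRingEnd ℂ (Z.z i) * Z'.z j) ^ n := by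
    intro n
    simp only [moment, map_sum, sum_mul_sum, map_mul, map_pow, map_intCast]
    exact sum_congr rfl fun i _ => sum_congr rfl fun j _ => by ring
  simp_rw [hexpand, sum_div, ← sum_neg_distrib, ← mul_neg, mul_div_assoc]
  exact hasSum_sum fun i _ => hasSum_sum fun j _ =>
    (Complex.hasSum_taylorSeries_neg_log' (Z.norm_conj_mul_lt_one Z' i j)).mul_left _

theorem hasSum_interaction :
    HasSum (fun n : ℕ => (starRingEnd ℂ (Z.moment (n + 1)) * Z'.moment (n + 1)).re
      / (2 * π * (n + 1))) (Z.interaction Z') := by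
  have h := (Complex.hasSum_re (Z.hasSum_conj_moment_mul_moment Z')).div_const (2 * π)
  have hre : (-∑ i, ∑ j, (Z.k i * Z'.k j : ℂ) *
      Complex.log (1 - starRingEnd ℂ (Z.z i) * Z'.z j)).re / (2 * π) = Z.interaction Z' := by
    simp only [interaction, Complex.neg_re, Complex.re_sum, sum_div, ← sum_neg_distrib]
    refine sum_congr rfl fun i _ => sum_congr rfl fun j _ => ?_
    rw [show (Z.k i * Z'.k j : ℂ) = ((Z.k i * Z'.k j : ℝ) : ℂ) by push_cast; ring,
      Complex.re_ofReal_mul, Complex.log_re]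
    ring
  rw [hre] at h
  refine h.congr_fun fun m => ?_
  rw [show ((m : ℂ) + 1) = ((m + 1 : ℝ) : ℂ) by push_cast; ring, Complex.div_ofReal_re, div_div,
    mul_comm (_ + 1)]

theorem norm_sub_pos {i i' : Fin Z.n} (h : i ≠ i') : 0 < ‖Z.z i - Z.z i'‖ :=
  norm_pos_iff.2 (sub_ne_zero.2 (Z.hinj.ne h))

theorem norm_one_sub_conj_mul_pos (i : Fin Z.n) (j : Fin Z'.n) :
    0 < ‖1 - starRingEnd ℂ (Z.z i) * Z'.z j‖ := by
  refine norm_pos_iff.2 (sub_ne_zero.2 fun h => ?_)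
  simpa [← h] using Z.norm_conj_mul_lt_one Z' i j

theorem norm_inv_conj_sub_pos (i : Fin Z.n) (j : Fin Z'.n) :
    0 < ‖(starRingEnd ℂ (Z.z i))⁻¹ - Z'.z j‖ := by
  rw [Complex.norm_inv_conj_sub _ (Z.z_ne_zero i)]
  exact div_pos (Z.norm_one_sub_conj_mul_pos Z' i j) (Z.hz i).1

theorem prod_pairs_rpow :
    ∏ i, ∏ i' ∈ univ.filter (i < ·), ‖Z.z i - Z.z i'‖ ^ ((Z.k i : ℝ) * Z.k i' / (2 * π))
      = exp Z.selfEnergy := by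
  rw [selfEnergy, exp_sum]
  exact prod_congr rfl fun i _ =>
    (exp_sum_mul_log _ fun i' hi' => Z.norm_sub_pos (mem_filter.1 hi').2.ne).symm

theorem prod_pairs_reflected_rpow :
    ∏ i, ∏ i' ∈ univ.filter (i < ·),
        ‖(starRingEnd ℂ (Z.z i))⁻¹ - (starRingEnd ℂ (Z.z i'))⁻¹‖ ^ ((Z.k i : ℝ) * Z.k i' / (2 * π))
      = exp (Z.selfEnergy - ∑ i, ∑ i' ∈ univ.filter (i < ·),
          (Z.k i : ℝ) * Z.k i' / (2 * π) * (log ‖Z.z i‖ + log ‖Z.z i'‖)) := by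
  rw [selfEnergy, ← sum_sub_distrib, exp_sum]
  refine prod_congr rfl fun i _ => ?_
  rw [← sum_sub_distrib, ← exp_sum_mul_log]
  · refine congrArg exp (sum_congr rfl fun i' hi' => ?_)
    rw [Complex.norm_inv_conj_sub_inv_conj (Z.z_ne_zero i) (Z.z_ne_zero i'),
      log_div (Z.norm_sub_pos (mem_filter.1 hi').2.ne).ne'
        (mul_pos (Z.hz i).1 (Z.hz i').1).ne', log_mul (Z.hz i).1.ne' (Z.hz i').1.ne']
    ring
  · intro i' hi'
    rw [Complex.norm_inv_conj_sub_inv_conj (Z.z_ne_zero i) (Z.z_ne_zero i')]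
    exact div_pos (Z.norm_sub_pos (mem_filter.1 hi').2.ne) (mul_pos (Z.hz i).1 (Z.hz i').1)

theorem prod_cross_rpow :
    ∏ i, ∏ j, ‖(starRingEnd ℂ (Z.z i))⁻¹ - Z'.z j‖ ^ (-((Z.k i : ℝ) * Z'.k j) / (2 * π))
      = exp (Z.interaction Z' + ∑ i, ∑ j, (Z.k i : ℝ) * Z'.k j / (2 * π) * log ‖Z.z i‖) := by
  rw [interaction, ← sum_add_distrib, exp_sum]
  refine prod_congr rfl fun i _ => ?_
  rw [← sum_add_distrib, ← exp_sum_mul_log _ fun j _ => Z.norm_inv_conj_sub_pos Z' i j]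
  refine congrArg exp (sum_congr rfl fun j _ => ?_)
  rw [Complex.norm_inv_conj_sub _ (Z.z_ne_zero i),
    log_div (Z.norm_one_sub_conj_mul_pos Z' i j).ne' (Z.hz i).1.ne']
  ring

theorem sum_log_norm_terms_eq_zero (hQ : Z.charge = Z'.charge) :
    ∑ i, -(Z.k i : ℝ) ^ 2 / (2 * π) * log ‖Z.z i‖
      - ∑ i, ∑ i' ∈ univ.filter (i < ·),
          (Z.k i : ℝ) * Z.k i' / (2 * π) * (log ‖Z.z i‖ + log ‖Z.z i'‖)
      + ∑ i, ∑ j, (Z.k i : ℝ) * Z'.k j / (2 * π) * log ‖Z.z i‖ = 0 := by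
  have hQ' : ∑ i, (Z.k i : ℝ) = ∑ j, (Z'.k j : ℝ) := by exact_mod_cast hQ
  have hpairs : ∑ i, ∑ i' ∈ univ.filter (i < ·),
        (Z.k i : ℝ) * Z.k i' / (2 * π) * (log ‖Z.z i‖ + log ‖Z.z i'‖)
      = ∑ i, (Z.k i : ℝ) * log ‖Z.z i‖ / (2 * π) * (∑ i', (Z.k i' : ℝ) - Z.k i) := by
    rw [← sum_sum_filter_lt_add_swap]
    exact sum_congr rfl fun i _ => sum_congr rfl fun i' _ => by ring
  have hcross : ∑ i, ∑ j, (Z.k i : ℝ) * Z'.k j / (2 * π) * log ‖Z.z i‖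
      = ∑ i, (Z.k i : ℝ) * log ‖Z.z i‖ / (2 * π) * ∑ j, (Z'.k j : ℝ) := by
    simp_rw [mul_sum]
    exact sum_congr rfl fun i _ => sum_congr rfl fun j _ => by ring
  rw [hpairs, hcross, hQ', ← sum_sub_distrib, ← sum_add_distrib]
  exact sum_eq_zero fun i _ => by ring

end Config

theorem reflCorr_eq (Z Z' : Config) :
    reflCorr Z Z' = if Z.charge = Z'.charge then
      exp (Z.selfEnergy + Z'.selfEnergy + Z.interaction Z') else 0 := by
  rw [reflCorr, ite_not, Config.charge, Config.charge]
  split_ifs with hQ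
  · rw [← exp_sum_mul_log _ fun i _ => (Z.hz i).1, Z.prod_pairs_reflected_rpow,
      Z'.prod_pairs_rpow, Z.prod_cross_rpow Z', ← exp_add, ← exp_add, ← exp_add]
    congr 1
    linear_combination Z.sum_log_norm_terms_eq_zero Z' hQ
  · rfl

open Matrix

theorem posSemidef_interaction {ι : Type*} [Finite ι] (Z : ι → Config) :
    (of fun a b => ((Z a).interaction (Z b) : ℂ)).PosSemidef := by
  let s : ℕ → ι → ℂ := fun m a => (Z a).moment (m + 1)
  refine PosSemidef.of_hasSum (f := fun m : ℕ => ((2 * π * (m + 1))⁻¹ : ℝ) •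
      (vecMulVec (star (s m)) (s m)).map fun z => (RCLike.re z : ℂ)) ?_
    fun m => (posSemidef_vecMulVec_star_self (s m)).map_re.smul (by positivity)
  refine Pi.hasSum.2 fun a => Pi.hasSum.2 fun b => ?_
  refine (Complex.hasSum_ofReal.2 ((Z a).hasSum_interaction (Z b))).congr_fun fun m => ?_
  simp only [Matrix.smul_apply, map_apply, vecMulVec_apply, Pi.star_apply, RCLike.re_to_complex,
    Complex.real_smul, Complex.star_def, s]
  push_cast
  ring

theorem posSemidef_reflCorr {ι : Type*} [Fintype ι] (Z : ι → Config) :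
    (of fun a b => (reflCorr (Z a) (Z b) : ℂ)).PosSemidef := by
  have hw := posSemidef_vecMulVec_star_self fun a => (exp (Z a).selfEnergy : ℂ)
  have hfactor : (of fun a b => (reflCorr (Z a) (Z b) : ℂ)) =
      (of fun a b => if (Z a).charge = (Z b).charge then 1 else 0) ⊙
        vecMulVec (star fun a => (exp (Z a).selfEnergy : ℂ)) (fun a => (exp (Z a).selfEnergy : ℂ)) ⊙
      (of fun a b => ((Z a).interaction (Z b) : ℂ)).map NormedSpace.exp := by
    ext a b
    simp only [of_apply, hadamard_apply, vecMulVec_apply, map_apply, Pi.star_apply,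
      ← Complex.exp_eq_exp_ℂ, reflCorr_eq]
    split_ifs
    · simp only [Complex.star_def, Complex.conj_ofReal, ← Complex.ofReal_exp, Real.exp_add,
        Complex.ofReal_mul]
      ring
    · simp
  rw [hfactor]
  exact ((posSemidef_of_ite_eq fun a => (Z a).charge).hadamard hw).hadamard
    (posSemidef_interaction Z).map_exp

/-- Reflection positivity of the flat expectation: for any finite family of configurations
`Z_1, …, Z_N` and coefficients `c_1, …, c_N`, the number `∑_{a,b} conj(c_a) c_b B(Z_a, Z_b)`
is real and nonnegative. -/
theorem reflection_positivity_flat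
    (N : ℕ) (Z : Fin N → Config) (c : Fin N → ℂ) :
    (∑ a, ∑ b, starRingEnd ℂ (c a) * c b * (reflCorr (Z a) (Z b) : ℂ)).im = 0 ∧
    0 ≤ (∑ a, ∑ b, starRingEnd ℂ (c a) * c b * (reflCorr (Z a) (Z b) : ℂ)).re := by
  have hform : star c ⬝ᵥ (of (fun a b => (reflCorr (Z a) (Z b) : ℂ)) *ᵥ c)
      = ∑ a, ∑ b, starRingEnd ℂ (c a) * c b * (reflCorr (Z a) (Z b) : ℂ) := by
    simp only [dotProduct, mulVec, mul_sum]
    exact sum_congr rfl fun a _ => sum_congr rfl fun b _ => by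
      rw [of_apply, Pi.star_apply, Complex.star_def]
      ring
  have h := Complex.nonneg_iff.1 ((posSemidef_reflCorr Z).dotProduct_mulVec_nonneg c)
  rw [hform] at h
  exact ⟨h.2.symm, h.1⟩
end

section
/- Let E be a real inner product space, let F and G be linear subspaces of E, and let β ≥ 1 be a real number. Suppose that for all f ∈ F and h ∈ G one has ‖f + h‖ ≤ β‖f − h‖. Then for all f ∈ F and h ∈ G, |⟨f, h⟩| ≤ ((β² − 1)/(β² + 1)) · ‖f‖ · ‖h‖. -/
/-!
Expanding `‖f + h‖² ≤ β² ‖f - h‖²` gives `2 (β² + 1) ⟪f, h⟫ ≤ (β² - 1) (‖f‖² + ‖h‖²)`.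
Since `F` and `G` are closed under scaling, we may apply this to `‖h‖ • f` and `‖f‖ • h`,
which have equal norms; then `‖f‖² + ‖h‖²` becomes `2 ‖f‖ ‖h‖` and the estimate is
homogeneous. Replacing `h` by `-h` bounds `-⟪f, h⟫` as well.
-/

open RealInnerProductSpace

section

variable {E : Type*} [NormedAddCommGroup E] [InnerProductSpace ℝ E]

lemma inner_le_of_norm_add_le_mul_norm_sub {x y : E} {β : ℝ}
    (hxy : ‖x + y‖ ≤ β * ‖x - y‖) :
    2 * (β ^ 2 + 1) * ⟪x, y⟫ ≤ (β ^ 2 - 1) * (‖x‖ ^ 2 + ‖y‖ ^ 2) := by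
  have hsq : ‖x + y‖ ^ 2 ≤ β ^ 2 * ‖x - y‖ ^ 2 := by
    rw [← mul_pow]
    exact pow_le_pow_left₀ (norm_nonneg _) hxy 2
  rw [norm_add_sq_real, norm_sub_sq_real] at hsq
  linarith

lemma inner_le_of_forall_norm_add_le_mul_norm_sub {F G : Submodule ℝ E} {β : ℝ}
    (hyp : ∀ f ∈ F, ∀ h ∈ G, ‖f + h‖ ≤ β * ‖f - h‖) {f h : E} (hf : f ∈ F) (hh : h ∈ G) :
    (β ^ 2 + 1) * ⟪f, h⟫ ≤ (β ^ 2 - 1) * (‖f‖ * ‖h‖) := by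
  rcases eq_or_ne f 0 with rfl | hf0
  · simp
  rcases eq_or_ne h 0 with rfl | hh0
  · simp
  have hpos : 0 < ‖f‖ * ‖h‖ := mul_pos (norm_pos_iff.2 hf0) (norm_pos_iff.2 hh0)
  have hscaled := inner_le_of_norm_add_le_mul_norm_sub
    (hyp _ (F.smul_mem ‖h‖ hf) _ (G.smul_mem ‖f‖ hh))
  rw [real_inner_smul_left, real_inner_smul_right, norm_smul, norm_smul, norm_norm,
    norm_norm] at hscaled
  have hscaled' : (‖f‖ * ‖h‖) * ((β ^ 2 + 1) * ⟪f, h⟫) ≤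
      (‖f‖ * ‖h‖) * ((β ^ 2 - 1) * (‖f‖ * ‖h‖)) := by
    linarith
  exact le_of_mul_le_mul_left hscaled' hpos

end

theorem almost_orthogonal_subspaces_general
    (E : Type*) [NormedAddCommGroup E] [InnerProductSpace ℝ E]
    (F G : Submodule ℝ E) (β : ℝ)
    (hyp : ∀ f ∈ F, ∀ h ∈ G, ‖f + h‖ ≤ β * ‖f - h‖) :
    ∀ f ∈ F, ∀ h ∈ G,
      |(inner ℝ f h : ℝ)| ≤ ((β ^ 2 - 1) / (β ^ 2 + 1)) * ‖f‖ * ‖h‖ := by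
  intro f hf h hh
  have hbound : ∀ h ∈ G, (β ^ 2 + 1) * ⟪f, h⟫ ≤ (β ^ 2 - 1) * (‖f‖ * ‖h‖) :=
    fun _ hh ↦ inner_le_of_forall_norm_add_le_mul_norm_sub hyp hf hh
  have habs : (β ^ 2 + 1) * |⟪f, h⟫| ≤ (β ^ 2 - 1) * (‖f‖ * ‖h‖) := by
    rw [abs_eq_max_neg, mul_max_of_nonneg _ _ (by positivity)]
    refine max_le (hbound h hh) ?_
    simpa [inner_neg_right] using hbound (-h) (G.neg_mem hh)
  rw [mul_assoc, div_mul_eq_mul_div, le_div_iff₀ (by positivity)]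
  linarith

/-- Abstract almost-orthogonality estimate: if `F`, `G` are subspaces of a real inner
product space with `‖f + h‖ ≤ β ‖f - h‖` for all `f ∈ F`, `h ∈ G` (with `β ≥ 1`), then
`|⟨f, h⟩| ≤ ((β² - 1)/(β² + 1)) ‖f‖ ‖h‖`. -/
theorem almost_orthogonal_subspaces
    (E : Type*) [NormedAddCommGroup E] [InnerProductSpace ℝ E]
    (F G : Submodule ℝ E) (β : ℝ) (hβ : 1 ≤ β)
    (hyp : ∀ f ∈ F, ∀ h ∈ G, ‖f + h‖ ≤ β * ‖f - h‖) :
    ∀ f ∈ F, ∀ h ∈ G,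
      |(inner ℝ f h : ℝ)| ≤ ((β ^ 2 - 1) / (β ^ 2 + 1)) * ‖f‖ * ‖h‖ :=
  almost_orthogonal_subspaces_general E F G β hyp
end

section
/- Let f : ℝ² → ℝ be continuously differentiable with compact support, and let g : ℝ² → ℝ be continuously differentiable with |g(x)| ≤ 1 for all x and ‖∇g(x)‖ ≤ c for all x, for some constant c ≥ 0. Let α > 0 and μ > 0 satisfy (1 + α) c² ≤ μ/α. Then ∫_{ℝ²} ‖∇(g·f)(x)‖² dx + μ ∫_{ℝ²} (g(x) f(x))² dx ≤ (1 + α^{−1}) · ( ∫_{ℝ²} ‖∇f(x)‖² dx + μ ∫_{ℝ²} f(x)² dx ). -/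
/-!
The estimate already holds pointwise. By the product rule and `|g| ≤ 1`,
`‖∇(gf)‖ ≤ ‖∇f‖ + c |f|`, and the Peter–Paul inequality
`(a + b)² ≤ (1 + α⁻¹) a² + (1 + α) b²` turns this into
`‖∇(gf)‖² ≤ (1 + α⁻¹) ‖∇f‖² + (1 + α) c² f²`. The hypothesis `(1 + α) c² ≤ μ / α` lets the
last term be absorbed by `α⁻¹ μ f²`, the extra share of the mass term on the right, while
`(gf)² ≤ f²` takes care of the mass term on the left. Integrating the pointwise bound gives the
theorem, since all the integrands are continuous with compact support.
-/

open MeasureTheory InnerProductSpace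

lemma add_sq_le_one_add_inv_mul_sq_add_one_add_mul_sq {α : ℝ} (hα : 0 < α) (a b : ℝ) :
    (a + b) ^ 2 ≤ (1 + α⁻¹) * a ^ 2 + (1 + α) * b ^ 2 := by
  have hcross : 2 * a * b ≤ α⁻¹ * a ^ 2 + α * b ^ 2 := by
    simpa only [inv_inv] using two_mul_le_add_mul_sq (a := a) (b := b) (inv_pos.2 hα)
  linarith [add_sq a b]

theorem Continuous.integrable_sq {X : Type*} [TopologicalSpace X] [MeasurableSpace X]
    [OpensMeasurableSpace X] {ν : Measure X} [IsFiniteMeasureOnCompacts ν] {f : X → ℝ}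
    (hf : Continuous f) (hfc : HasCompactSupport f) : Integrable (fun x => f x ^ 2) ν := by
  have hfc2 : HasCompactSupport (fun x => f x ^ 2) :=
    hfc.comp_left (g := fun t : ℝ => t ^ 2) (zero_pow two_ne_zero)
  exact (hf.pow 2).integrable_of_hasCompactSupport hfc2

section Gradient

variable {F : Type*} [NormedAddCommGroup F] [InnerProductSpace ℝ F] [CompleteSpace F]

theorem gradient_fun_mul {f g : F → ℝ} {x : F} (hf : DifferentiableAt ℝ f x)
    (hg : DifferentiableAt ℝ g x) :
    gradient (fun y => f y * g y) x = f x • gradient g x + g x • gradient f x := by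
  simp only [gradient, fderiv_fun_mul hf hg, map_add, map_smul]

theorem ContDiff.continuous_gradient {f : F → ℝ} (hf : ContDiff ℝ 1 f) :
    Continuous (gradient f) :=
  (toDual ℝ F).symm.continuous.comp (hf.continuous_fderiv one_ne_zero)

theorem HasCompactSupport.gradient {f : F → ℝ} (hf : HasCompactSupport f) :
    HasCompactSupport (_root_.gradient f) :=
  (hf.fderiv (𝕜 := ℝ)).comp_left (map_zero _)

theorem norm_gradient_mul_le {f g : F → ℝ} {x : F} {c : ℝ} (hf : DifferentiableAt ℝ f x)
    (hg : DifferentiableAt ℝ g x) (hgb : |g x| ≤ 1) (hgd : ‖gradient g x‖ ≤ c) :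
    ‖gradient (fun y => g y * f y) x‖ ≤ ‖gradient f x‖ + c * |f x| := by
  rw [gradient_fun_mul hg hf]
  calc ‖g x • gradient f x + f x • gradient g x‖
      ≤ |g x| * ‖gradient f x‖ + |f x| * ‖gradient g x‖ := by
        simpa only [norm_smul, Real.norm_eq_abs] using
          norm_add_le (g x • gradient f x) (f x • gradient g x)
    _ ≤ 1 * ‖gradient f x‖ + |f x| * c := by gcongr
    _ = ‖gradient f x‖ + c * |f x| := by ring

theorem sq_norm_gradient_mul_add_le {f g : F → ℝ} {x : F} {c α μ : ℝ}
    (hf : DifferentiableAt ℝ f x) (hg : DifferentiableAt ℝ g x) (hgb : |g x| ≤ 1)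
    (hgd : ‖gradient g x‖ ≤ c) (hα : 0 < α) (hμ : 0 ≤ μ) (hcond : (1 + α) * c ^ 2 ≤ μ / α) :
    ‖gradient (fun y => g y * f y) x‖ ^ 2 + μ * (g x * f x) ^ 2
      ≤ (1 + α⁻¹) * (‖gradient f x‖ ^ 2 + μ * f x ^ 2) := by
  have hgrad : ‖gradient (fun y => g y * f y) x‖ ^ 2
      ≤ (1 + α⁻¹) * ‖gradient f x‖ ^ 2 + (1 + α) * (c * |f x|) ^ 2 :=
    (pow_le_pow_left₀ (norm_nonneg _) (norm_gradient_mul_le hf hg hgb hgd) 2).trans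
      (add_sq_le_one_add_inv_mul_sq_add_one_add_mul_sq hα _ _)
  have habsorb : (1 + α) * (c * |f x|) ^ 2 ≤ α⁻¹ * μ * f x ^ 2 := by
    rw [mul_pow, sq_abs, ← mul_assoc, ← div_eq_inv_mul]
    gcongr
  have hmass : (g x * f x) ^ 2 ≤ f x ^ 2 := by
    rw [mul_pow]
    exact mul_le_of_le_one_left (sq_nonneg _) ((sq_le_one_iff_abs_le_one _).2 hgb)
  calc ‖gradient (fun y => g y * f y) x‖ ^ 2 + μ * (g x * f x) ^ 2
      ≤ (1 + α⁻¹) * ‖gradient f x‖ ^ 2 + α⁻¹ * μ * f x ^ 2 + μ * f x ^ 2 := by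
        linarith [mul_le_mul_of_nonneg_left hmass hμ]
    _ = (1 + α⁻¹) * (‖gradient f x‖ ^ 2 + μ * f x ^ 2) := by ring

variable [MeasurableSpace F] [OpensMeasurableSpace F] (ν : Measure F)
  [IsFiniteMeasureOnCompacts ν]

noncomputable def sobolevNormSq (μ : ℝ) (f : F → ℝ) : ℝ :=
  (∫ x, ‖gradient f x‖ ^ 2 ∂ν) + μ * ∫ x, f x ^ 2 ∂ν

variable {ν}

theorem ContDiff.integrable_sq_norm_gradient {f : F → ℝ} (hf : ContDiff ℝ 1 f)
    (hfc : HasCompactSupport f) : Integrable (fun x => ‖gradient f x‖ ^ 2) ν :=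
  hf.continuous_gradient.norm.integrable_sq hfc.gradient.norm

theorem integrable_sq_norm_gradient_add_mul_sq {f : F → ℝ} (hf : ContDiff ℝ 1 f)
    (hfc : HasCompactSupport f) (μ : ℝ) :
    Integrable (fun x => ‖gradient f x‖ ^ 2 + μ * f x ^ 2) ν :=
  (hf.integrable_sq_norm_gradient hfc).add ((hf.continuous.integrable_sq hfc).const_mul μ)

theorem sobolevNormSq_eq_integral {f : F → ℝ} (hf : ContDiff ℝ 1 f)
    (hfc : HasCompactSupport f) (μ : ℝ) :
    sobolevNormSq ν μ f = ∫ x, ‖gradient f x‖ ^ 2 + μ * f x ^ 2 ∂ν := by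
  rw [sobolevNormSq, integral_add (hf.integrable_sq_norm_gradient hfc)
    ((hf.continuous.integrable_sq hfc).const_mul μ), integral_const_mul]

theorem sobolevNormSq_le_of_forall_le {f₁ f₂ : F → ℝ} {μ K : ℝ}
    (hf₁ : ContDiff ℝ 1 f₁) (hf₁c : HasCompactSupport f₁)
    (hf₂ : ContDiff ℝ 1 f₂) (hf₂c : HasCompactSupport f₂)
    (h : ∀ x, ‖gradient f₁ x‖ ^ 2 + μ * f₁ x ^ 2 ≤ K * (‖gradient f₂ x‖ ^ 2 + μ * f₂ x ^ 2)) :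
    sobolevNormSq ν μ f₁ ≤ K * sobolevNormSq ν μ f₂ := by
  rw [sobolevNormSq_eq_integral hf₁ hf₁c, sobolevNormSq_eq_integral hf₂ hf₂c,
    ← integral_const_mul]
  exact integral_mono (integrable_sq_norm_gradient_add_mul_sq hf₁ hf₁c μ)
    ((integrable_sq_norm_gradient_add_mul_sq hf₂ hf₂c μ).const_mul K) h

end Gradient

theorem sobolev_multiplication_bound_general
    (f g : EuclideanSpace ℝ (Fin 2) → ℝ)
    (hf : ContDiff ℝ 1 f) (hfc : HasCompactSupport f)
    (hg : ContDiff ℝ 1 g) (c : ℝ)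
    (hgb : ∀ x, |g x| ≤ 1) (hgd : ∀ x, ‖gradient g x‖ ≤ c)
    (α μ : ℝ) (hα : 0 < α) (hμ : 0 < μ)
    (hcond : (1 + α) * c ^ 2 ≤ μ / α) :
    (∫ x, ‖gradient (fun y => g y * f y) x‖ ^ 2) + μ * ∫ x, (g x * f x) ^ 2
      ≤ (1 + α⁻¹) * ((∫ x, ‖gradient f x‖ ^ 2) + μ * ∫ x, f x ^ 2) :=
  sobolevNormSq_le_of_forall_le (hg.mul hf) hfc.mul_left hf hfc fun x =>
    sq_norm_gradient_mul_add_le (hf.differentiable one_ne_zero x)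
      (hg.differentiable one_ne_zero x) (hgb x) (hgd x) hα hμ.le hcond

/-- Quantitative Sobolev estimate for multiplication by a slowly varying bounded function:
if `|g| ≤ 1`, `‖∇g‖ ≤ c` and `(1+α) c² ≤ μ/α`, then
`‖∇(gf)‖² + μ ‖gf‖² ≤ (1 + α⁻¹) (‖∇f‖² + μ ‖f‖²)` in `L²(ℝ²)`. -/
theorem sobolev_multiplication_bound
    (f g : EuclideanSpace ℝ (Fin 2) → ℝ)
    (hf : ContDiff ℝ 1 f) (hfc : HasCompactSupport f)
    (hg : ContDiff ℝ 1 g) (c : ℝ) (hc : 0 ≤ c)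
    (hgb : ∀ x, |g x| ≤ 1) (hgd : ∀ x, ‖gradient g x‖ ≤ c)
    (α μ : ℝ) (hα : 0 < α) (hμ : 0 < μ)
    (hcond : (1 + α) * c ^ 2 ≤ μ / α) :
    (∫ x, ‖gradient (fun y => g y * f y) x‖ ^ 2) + μ * ∫ x, (g x * f x) ^ 2
      ≤ (1 + α⁻¹) * ((∫ x, ‖gradient f x‖ ^ 2) + μ * ∫ x, f x ^ 2) :=
  sobolev_multiplication_bound_general f g hf hfc hg c hgb hgd α μ hα hμ hcond
end

section
/- Let f : ℝ² → ℝ be a continuous function with compact support satisfying ∫_{ℝ²} f(y) dy = 0, and define g : ℝ² → ℝ by g(x) = −(1/(2π)) ∫_{ℝ²} log‖x − y‖ · f(y) dy. Then g(x) → 0 as ‖x‖ → ∞ (that is, g tends to 0 along the cocompact filter on ℝ²). -/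
/-!
Since `∫ f = 0`, subtracting `log ‖x‖ · f` does not change the potential, so
`∫ log ‖x - y‖ f(y) dy = ∫ log (‖x - y‖ / ‖x‖) f(y) dy`. If `f` vanishes outside the ball of
radius `R` and `‖x‖ ≥ 2R`, then `|log (‖x - y‖ / ‖x‖)| ≤ 2R / ‖x‖` on the support of `f`, so the
potential is `O(1 / ‖x‖)`.
-/

open Real MeasureTheory Filter Function

lemma abs_log_sub_log_le_div {a b c : ℝ} (hc : 0 < c) (ha : c ≤ a) (hb : c ≤ b) :
    |log a - log b| ≤ |a - b| / c := by
  wlog hba : b ≤ a generalizing a b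
  · rw [abs_sub_comm, abs_sub_comm a b]
    exact this hb ha (le_of_not_ge hba)
  have hb0 : 0 < b := hc.trans_le hb
  rw [abs_of_nonneg (sub_nonneg.2 (log_le_log hb0 hba)), abs_of_nonneg (sub_nonneg.2 hba),
    ← log_div (hb0.trans_le hba).ne' hb0.ne']
  calc log (a / b) ≤ a / b - 1 := log_le_sub_one_of_pos (div_pos (hb0.trans_le hba) hb0)
    _ = (a - b) / b := by field_simp
    _ ≤ (a - b) / c := div_le_div_of_nonneg_left (sub_nonneg.2 hba) hc hb

lemma abs_log_norm_sub_sub_log_norm_le {E : Type*} [SeminormedAddCommGroup E] {x y : E}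
    (h : 2 * ‖y‖ ≤ ‖x‖) : |log ‖x - y‖ - log ‖x‖| ≤ 2 * ‖y‖ / ‖x‖ := by
  rcases (norm_nonneg x).eq_or_lt with hx | hx
  · have hxy : ‖x - y‖ = ‖x‖ :=
      le_antisymm ((norm_sub_le x y).trans (by linarith [norm_nonneg y])) (hx ▸ norm_nonneg _)
    rw [hxy, sub_self, abs_zero]
    positivity
  have hxy : ‖x‖ / 2 ≤ ‖x - y‖ := by linarith [norm_sub_norm_le x y]
  calc |log ‖x - y‖ - log ‖x‖| ≤ |‖x - y‖ - ‖x‖| / (‖x‖ / 2) :=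
        abs_log_sub_log_le_div (by positivity) hxy (by linarith)
    _ ≤ ‖y‖ / (‖x‖ / 2) := by
        gcongr
        simpa using abs_norm_sub_norm_le (x - y) x
    _ = 2 * ‖y‖ / ‖x‖ := by field_simp

section LogPotential

variable {E : Type*} [NormedAddCommGroup E] [MeasurableSpace E] [OpensMeasurableSpace E]
  {μ : Measure E} {f : E → ℝ}

lemma norm_integral_log_norm_sub_mul_le (hf : Integrable f μ) (hmean : ∫ y, f y ∂μ = 0)
    {R : ℝ} (hR : ∀ y, f y ≠ 0 → ‖y‖ ≤ R) {x : E} (hx : 2 * R ≤ ‖x‖) :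
    ‖∫ y, log ‖x - y‖ * f y ∂μ‖ ≤ 2 * R / ‖x‖ * ∫ y, |f y| ∂μ := by
  have hpointwise : ∀ y, ‖(log ‖x - y‖ - log ‖x‖) * f y‖ ≤ 2 * R / ‖x‖ * |f y| := by
    intro y
    by_cases hfy : f y = 0
    · simp [hfy]
    have hy := hR y hfy
    rw [norm_mul, norm_eq_abs, norm_eq_abs]
    gcongr
    exact (abs_log_norm_sub_sub_log_norm_le (by linarith)).trans (by gcongr)
  have hdom : Integrable (fun y => 2 * R / ‖x‖ * |f y|) μ := hf.abs.const_mul _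
  have hdiff : Integrable (fun y => (log ‖x - y‖ - log ‖x‖) * f y) μ := by
    refine hdom.mono' ?_ (ae_of_all _ hpointwise)
    exact (((measurable_log.comp (continuous_const.sub continuous_id).norm.measurable).sub_const _)
      |>.aestronglyMeasurable).mul hf.aestronglyMeasurable
  have hneutral : ∫ y, log ‖x - y‖ * f y ∂μ = ∫ y, (log ‖x - y‖ - log ‖x‖) * f y ∂μ := by
    have hsplit : (fun y => log ‖x - y‖ * f y) =
        fun y => (log ‖x - y‖ - log ‖x‖) * f y + log ‖x‖ * f y := by
      funext y; ring
    rw [hsplit, integral_add hdiff (hf.const_mul _), integral_const_mul, hmean, mul_zero,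
      add_zero]
  rw [hneutral, ← integral_const_mul]
  exact norm_integral_le_of_norm_le hdom (ae_of_all _ hpointwise)

theorem tendsto_integral_log_norm_sub_mul_cocompact [ProperSpace E] (hf : Integrable f μ)
    (hmean : ∫ y, f y ∂μ = 0) (hbdd : Bornology.IsBounded (support f)) :
    Tendsto (fun x => ∫ y, log ‖x - y‖ * f y ∂μ) (cocompact E) (nhds 0) := by
  obtain ⟨R, hR⟩ := hbdd.subset_closedBall 0
  have hR' : ∀ y, f y ≠ 0 → ‖y‖ ≤ R := fun y hy => by simpa using hR hy
  have hdecay : Tendsto (fun x : E => 2 * R / ‖x‖ * ∫ y, |f y| ∂μ) (cocompact E) (nhds 0) := by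
    simpa using (tendsto_const_nhds.div_atTop tendsto_norm_cocompact_atTop).mul_const _
  refine squeeze_zero_norm' ?_ hdecay
  filter_upwards [tendsto_norm_cocompact_atTop.eventually_ge_atTop (2 * R)] with x hx
  exact norm_integral_log_norm_sub_mul_le hf hmean hR' hx

end LogPotential

/-- The logarithmic potential of a neutral charge distribution vanishes at infinity:
if `f` is continuous with compact support and `∫ f = 0`, then
`g(x) = -(1/(2π)) ∫ log‖x-y‖ f(y) dy` tends to `0` along the cocompact filter on `ℝ²`. -/
theorem log_potential_neutral_decay
    (f : EuclideanSpace ℝ (Fin 2) → ℝ) (hf : Continuous f)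
    (hsupp : HasCompactSupport f) (hmean : ∫ y, f y = 0) :
    Tendsto (fun x : EuclideanSpace ℝ (Fin 2) =>
        -(1 / (2 * π)) * ∫ y, Real.log ‖x - y‖ * f y)
      (cocompact (EuclideanSpace ℝ (Fin 2))) (nhds 0) := by
  have hbdd : Bornology.IsBounded (support f) :=
    hsupp.isCompact.isBounded.subset (subset_tsupport f)
  simpa using (tendsto_integral_log_norm_sub_mul_cocompact
    (hf.integrable_of_hasCompactSupport hsupp) hmean hbdd).const_mul (-(1 / (2 * π)))
end

section
/- Let H be a complex Hilbert space and let A : H → H be a bounded self-adjoint operator which is positive in the sense that re⟨x, Ax⟩ ≥ 0 for all x ∈ H. Let g ∈ H and set f = A g. Then lim_{μ → 0⁺} ⟨f, (A + μ·I)^{−1} f⟩ = ⟨g, A g⟩. -/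
/-!
Write `R = (A + μ)⁻¹`. Both `A R` and `R A` equal `1 - μ R`, so by symmetry of `A`,
`⟪A g, R (A g)⟫ = ⟪g, A (R (A g))⟫ = ⟪g, A g⟫ - μ ⟪g, g - μ R g⟫`.
Positivity of `A` makes `A + μ` coercive with constant `μ`, whence `‖μ R x‖ ≤ ‖x‖` and the
error term is at most `2 μ ‖g‖²`.
-/

open Filter Topology

theorem Ring.mul_inverse_add_eq_one_sub {R : Type*} [Ring R] {a c : R} (h : IsUnit (a + c)) :
    a * Ring.inverse (a + c) = 1 - c * Ring.inverse (a + c) := by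
  rw [eq_sub_iff_add_eq, ← add_mul, Ring.mul_inverse_cancel _ h]

theorem Ring.inverse_add_mul_eq_one_sub {R : Type*} [Ring R] {a c : R} (h : IsUnit (a + c)) :
    Ring.inverse (a + c) * a = 1 - Ring.inverse (a + c) * c := by
  rw [eq_sub_iff_add_eq, ← mul_add, Ring.inverse_mul_cancel _ h]

namespace ContinuousLinearMap

open RCLike

variable {𝕜 H : Type*} [RCLike 𝕜] [NormedAddCommGroup H] [InnerProductSpace 𝕜 H]
  {A : H →L[𝕜] H} {μ : ℝ}

local notation "⟪" x ", " y "⟫" => inner 𝕜 x y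

theorem sq_norm_mul_le_re_inner_add_smul_one (hpos : ∀ x, 0 ≤ re ⟪x, A x⟫) (x : H) :
    ‖x‖ ^ 2 * μ ≤ re ⟪x, (A + (μ : 𝕜) • 1) x⟫ := by
  rw [add_apply, smul_apply, one_apply_eq_self, inner_add_right, inner_smul_right, map_add,
    re_ofReal_mul, inner_self_eq_norm_sq]
  linarith [hpos x]

theorem isUnit_add_smul_one [CompleteSpace H] (hpos : ∀ x, 0 ≤ re ⟪x, A x⟫) (hμ : 0 < μ) :
    IsUnit (A + (μ : 𝕜) • 1) :=
  isUnit_of_forall_le_norm_inner_map _ (c := ⟨μ, hμ.le⟩) hμ fun x ↦ calc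
    ‖x‖ ^ 2 * μ ≤ re ⟪x, (A + (μ : 𝕜) • 1) x⟫ := sq_norm_mul_le_re_inner_add_smul_one hpos x
    _ ≤ ‖⟪x, (A + (μ : 𝕜) • 1) x⟫‖ := re_le_norm _
    _ = ‖⟪(A + (μ : 𝕜) • 1) x, x⟫‖ := by rw [← inner_conj_symm, norm_conj]

theorem mul_norm_inverse_add_smul_one_apply_le [CompleteSpace H] (hpos : ∀ x, 0 ≤ re ⟪x, A x⟫)
    (hμ : 0 < μ) (x : H) : μ * ‖Ring.inverse (A + (μ : 𝕜) • 1) x‖ ≤ ‖x‖ := by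
  set y := Ring.inverse (A + (μ : 𝕜) • 1) x
  have hy : (A + (μ : 𝕜) • 1) y = x := by
    rw [← mul_apply_eq_comp, Ring.mul_inverse_cancel _ (isUnit_add_smul_one hpos hμ),
      one_apply_eq_self]
  rcases (norm_nonneg y).eq_or_lt with hy0 | hy0
  · rw [← hy0, mul_zero]; exact norm_nonneg x
  have hmul := calc
    ‖y‖ * (μ * ‖y‖) = ‖y‖ ^ 2 * μ := by ring
    _ ≤ re ⟪y, x⟫ := hy ▸ sq_norm_mul_le_re_inner_add_smul_one hpos y
    _ ≤ ‖y‖ * ‖x‖ := (re_le_norm _).trans (norm_inner_le_norm _ _)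
  exact le_of_mul_le_mul_left hmul hy0

theorem inner_map_inverse_add_smul_one_map (hA : (A : H →ₗ[𝕜] H).IsSymmetric)
    (hu : IsUnit (A + (μ : 𝕜) • 1)) (g : H) :
    ⟪A g, Ring.inverse (A + (μ : 𝕜) • 1) (A g)⟫
      = ⟪g, A g⟫ - μ * ⟪g, g - (μ : 𝕜) • Ring.inverse (A + (μ : 𝕜) • 1) g⟫ := by
  set R := Ring.inverse (A + (μ : 𝕜) • 1)
  have hAR : A * R = 1 - ((μ : 𝕜) • 1) * R := Ring.mul_inverse_add_eq_one_sub hu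
  have hRA : R * A = 1 - R * ((μ : 𝕜) • 1) := Ring.inverse_add_mul_eq_one_sub hu
  calc ⟪A g, R (A g)⟫ = ⟪g, (A * R) (A g)⟫ := hA _ _
    _ = ⟪g, A g - (μ : 𝕜) • (R * A) g⟫ := by simp [hAR]
    _ = ⟪g, A g⟫ - μ * ⟪g, g - (μ : 𝕜) • R g⟫ := by
      simp [hRA, inner_sub_right, inner_smul_right]

theorem norm_sub_inner_map_inverse_add_smul_one_map_le [CompleteSpace H]
    (hA : (A : H →ₗ[𝕜] H).IsSymmetric) (hpos : ∀ x, 0 ≤ re ⟪x, A x⟫) (hμ : 0 < μ) (g : H) :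
    ‖⟪g, A g⟫ - ⟪A g, Ring.inverse (A + (μ : 𝕜) • 1) (A g)⟫‖ ≤ 2 * μ * ‖g‖ ^ 2 := by
  set R := Ring.inverse (A + (μ : 𝕜) • 1)
  have hRg : ‖(μ : 𝕜) • R g‖ ≤ ‖g‖ := by
    rw [norm_smul, norm_ofReal, abs_of_pos hμ]
    exact mul_norm_inverse_add_smul_one_apply_le hpos hμ g
  rw [inner_map_inverse_add_smul_one_map hA (isUnit_add_smul_one hpos hμ), sub_sub_cancel,
    norm_mul, norm_ofReal, abs_of_pos hμ]
  calc μ * ‖⟪g, g - (μ : 𝕜) • R g⟫‖ ≤ μ * (‖g‖ * (‖g‖ + ‖g‖)) := by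
        gcongr
        exact (norm_inner_le_norm _ _).trans (by gcongr; exact (norm_sub_le _ _).trans (by gcongr))
    _ = 2 * μ * ‖g‖ ^ 2 := by ring

theorem tendsto_inner_map_inverse_add_smul_one_map [CompleteSpace H]
    (hA : (A : H →ₗ[𝕜] H).IsSymmetric) (hpos : ∀ x, 0 ≤ re ⟪x, A x⟫) (g : H) :
    Tendsto (fun μ : ℝ ↦ ⟪A g, Ring.inverse (A + (μ : 𝕜) • 1) (A g)⟫) (𝓝[>] 0) (𝓝 ⟪g, A g⟫) := by
  rw [tendsto_iff_norm_sub_tendsto_zero]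
  have hbound : Tendsto (fun μ : ℝ ↦ 2 * μ * ‖g‖ ^ 2) (𝓝[>] 0) (𝓝 0) := by
    have h : Tendsto (fun μ : ℝ ↦ 2 * μ * ‖g‖ ^ 2) (𝓝 0) (𝓝 (2 * 0 * ‖g‖ ^ 2)) :=
      (tendsto_const_nhds.mul tendsto_id).mul tendsto_const_nhds
    simpa using h.mono_left nhdsWithin_le_nhds
  refine squeeze_zero' (Eventually.of_forall fun _ ↦ norm_nonneg _) ?_ hbound
  filter_upwards [self_mem_nhdsWithin] with μ (hμ : 0 < μ)
  rw [norm_sub_rev]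
  exact norm_sub_inner_map_inverse_add_smul_one_map_le hA hpos hμ g

end ContinuousLinearMap

/-- Massless limit of the resolvent quadratic form on the range of `A`: if `A ≥ 0` is a
bounded self-adjoint operator and `f = A g`, then
`⟨f, (A + μI)^{-1} f⟩ → ⟨g, A g⟩` as `μ → 0⁺`. -/
theorem resolvent_form_massless_limit
    (H : Type*) [NormedAddCommGroup H] [InnerProductSpace ℂ H] [CompleteSpace H]
    (A : H →L[ℂ] H) (hA : IsSelfAdjoint A)
    (hpos : ∀ x : H, 0 ≤ (inner ℂ x (A x) : ℂ).re)
    (g : H) (f : H) (hf : f = A g) :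
    Tendsto (fun μ : ℝ =>
        (inner ℂ f (Ring.inverse (A + (μ : ℂ) • (1 : H →L[ℂ] H)) f) : ℂ))
      (𝓝[>] 0) (𝓝 (inner ℂ g (A g) : ℂ)) := by
  subst hf
  exact A.tendsto_inner_map_inverse_add_smul_one_map hA.isSymmetric hpos g
end
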